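/- arXiv:0905.2914 — 2 statements merged into one kernel-verified Lean document; each statement's English description precedes it below -/
import Mathlib

section
/- Let φ ∈ C²((0,∞); ℝ) and F > 0 with φ''(2F) ≤ 0. Then for all u, v ∈ 𝒰, |E_qce''(y_F)[u,v] − φ''(F) ⟨u', v'⟩| ≤ 5 |φ''(2F)| ‖u'‖_{ℓ∞} ‖v'‖_{ℓ¹_ε}. -/
open Finset Real

noncomputable section

/-- The index set `{-N+1, ..., N}` of one period. -/
def idx (N : ℕ) : Finset ℤ := Finset.Icc (-(N : ℤ) + 1) (N : ℤ)

/-- The space 𝒰 of 2N-periodic displacements with zero mean. -/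
def uSet (N : ℕ) : Set (ℤ → ℝ) :=
  {u | (∀ ℓ : ℤ, u (ℓ + 2 * (N : ℤ)) = u ℓ) ∧ ∑ ℓ ∈ idx N, u ℓ = 0}

/-- Backward difference `v'_ℓ = ε⁻¹ (v_ℓ - v_{ℓ-1})`, with `ε = 1/N`. -/
def bD (N : ℕ) (v : ℤ → ℝ) (ℓ : ℤ) : ℝ := (N : ℝ) * (v ℓ - v (ℓ - 1))

/-- Centered second difference `v''_ℓ = ε⁻² (v_{ℓ+1} - 2 v_ℓ + v_{ℓ-1})`. -/
def cD2 (N : ℕ) (v : ℤ → ℝ) (ℓ : ℤ) : ℝ := (N : ℝ) ^ 2 * (v (ℓ + 1) - 2 * v ℓ + v (ℓ - 1))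

/-- Weighted ℓ²-norm. -/
def nl2 (N : ℕ) (v : ℤ → ℝ) : ℝ := Real.sqrt ((N : ℝ)⁻¹ * ∑ ℓ ∈ idx N, (v ℓ) ^ 2)

/-- Weighted ℓ¹-norm. -/
def nl1 (N : ℕ) (v : ℤ → ℝ) : ℝ := (N : ℝ)⁻¹ * ∑ ℓ ∈ idx N, |v ℓ|

/-- ℓ∞-norm over one period. -/
def nlinf (N : ℕ) (v : ℤ → ℝ) : ℝ := ⨆ ℓ : {ℓ : ℤ // ℓ ∈ idx N}, |v ℓ.1|

/-- Weighted ℓ²-inner product. -/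
def iprod (N : ℕ) (u v : ℤ → ℝ) : ℝ := (N : ℝ)⁻¹ * ∑ ℓ ∈ idx N, u ℓ * v ℓ

/-- The uniform deformation `(y_F)_ℓ = F ℓ ε`. -/
def yF (N : ℕ) (F : ℝ) : ℤ → ℝ := fun ℓ => F * (ℓ : ℝ) * (N : ℝ)⁻¹

/-- First variation `E'(y)[u]`. -/
def dE (E : (ℤ → ℝ) → ℝ) (y u : ℤ → ℝ) : ℝ := deriv (fun t : ℝ => E (y + t • u)) 0

/-- Second variation `E''(y)[u,v]`. -/
def d2E (E : (ℤ → ℝ) → ℝ) (y u v : ℤ → ℝ) : ℝ :=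
  deriv (fun s : ℝ => deriv (fun t : ℝ => E (y + s • u + t • v)) 0) 0

/-- The atomistic energy. -/
def Ea (N : ℕ) (φ : ℝ → ℝ) (y : ℤ → ℝ) : ℝ :=
  (N : ℝ)⁻¹ * ∑ ℓ ∈ idx N, (φ (bD N y ℓ) + φ (bD N y ℓ + bD N y (ℓ + 1)))

/-- The local QC (continuum) energy. -/
def Eqcl (N : ℕ) (φ : ℝ → ℝ) (y : ℤ → ℝ) : ℝ :=
  (N : ℝ)⁻¹ * ∑ ℓ ∈ idx N, (φ (bD N y ℓ) + φ (2 * bD N y ℓ))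

/-- The QNL atomistic region `{-K-1, ..., K+1}`. -/
def aQnl (K : ℕ) : Finset ℤ := Finset.Icc (-(K : ℤ) - 1) ((K : ℤ) + 1)

/-- The quasi-nonlocal QC energy. -/
def Eqnl (N K : ℕ) (φ : ℝ → ℝ) (y : ℤ → ℝ) : ℝ :=
  (N : ℝ)⁻¹ * ((∑ ℓ ∈ idx N, φ (bD N y ℓ))
    + (∑ ℓ ∈ aQnl K, φ (bD N y ℓ + bD N y (ℓ + 1)))
    + ∑ ℓ ∈ idx N \ aQnl K, (φ (2 * bD N y ℓ) + φ (2 * bD N y (ℓ + 1))) / 2)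

/-- The QCE atomistic region `{-K, ..., K}`. -/
def aQce (K : ℕ) : Finset ℤ := Finset.Icc (-(K : ℤ)) (K : ℤ)

/-- Atomistic energy contribution of atom ℓ. -/
def eAtom (N : ℕ) (φ : ℝ → ℝ) (y : ℤ → ℝ) (ℓ : ℤ) : ℝ :=
  (φ (bD N y ℓ) + φ (bD N y (ℓ + 1)) + φ (bD N y (ℓ - 1) + bD N y ℓ)
    + φ (bD N y (ℓ + 1) + bD N y (ℓ + 2))) / 2

/-- Continuum energy contribution of atom ℓ. -/
def eCont (N : ℕ) (φ : ℝ → ℝ) (y : ℤ → ℝ) (ℓ : ℤ) : ℝ :=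
  (φ (bD N y ℓ) + φ (bD N y (ℓ + 1)) + φ (2 * bD N y ℓ) + φ (2 * bD N y (ℓ + 1))) / 2

/-- The energy-based QC energy. -/
def Eqce (N K : ℕ) (φ : ℝ → ℝ) (y : ℤ → ℝ) : ℝ :=
  (N : ℝ)⁻¹ * ((∑ ℓ ∈ idx N \ aQce K, eCont N φ y ℓ) + ∑ ℓ ∈ aQce K, eAtom N φ y ℓ)

/-- The prescribed backward difference `ĝ'` of the ghost-force corrector. -/
def ghatD (K : ℕ) (ℓ : ℤ) : ℝ :=
  if ℓ = -(K : ℤ) - 1 ∨ ℓ = (K : ℤ) + 2 then -(1 / 2)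
  else if ℓ = -(K : ℤ) + 1 ∨ ℓ = (K : ℤ) then 1 / 2 else 0

/-- `μ_ε = 2 sin(π ε / 2) / ε` with `ε = 1/N`. -/
def muEps (N : ℕ) : ℝ := 2 * Real.sin (Real.pi * (N : ℝ)⁻¹ / 2) / (N : ℝ)⁻¹

/-- The `𝒰^{-1,∞}`-norm of a functional `T` on 𝒰. -/
def dualNorm (N : ℕ) (T : (ℤ → ℝ) → ℝ) : ℝ :=
  sSup {r : ℝ | ∃ v ∈ uSet N, nl1 N (bD N v) = 1 ∧ r = T v}


/-!
Along `y_F + s u + t v` every bond of `E_qce` contributes `φ` of an affine function of `(s, t)` with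
base value `F` (nearest neighbours) or `2F` (second neighbours), so `E_qce''(y_F)[u, v]` is a finite
sum of terms `φ''(F) a b` and `φ''(2F) a b`. By periodicity the `φ''(F)` terms add up to exactly
`φ''(F) ⟨u', v'⟩`. Bounding each `φ''(2F)` term by `‖u'‖_∞ |v'_ℓ|` leaves a weighted sum of the
`|v'_ℓ|` with weight `4` away from the interface; at the interface a telescoping sum shows that the
excess is at most `|v'_{-K-1}| + |v'_{K+2}| ≤ Σ_ℓ |v'_ℓ|`, whence the constant `5`.
-/

open Filter Topology Function

/-- `c` is the mixed derivative `∂ₛ∂ₜG` at the origin in the iterated sense of `d2E`, with the inner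
`t`-derivative existing for all `s` near `0`. -/
def HasMixedDeriv (G : ℝ → ℝ → ℝ) (c : ℝ) : Prop :=
  (∀ᶠ s in 𝓝 0, DifferentiableAt ℝ (G s) 0) ∧ HasDerivAt (fun s => deriv (G s) 0) c 0

namespace HasMixedDeriv

variable {G H : ℝ → ℝ → ℝ} {c d : ℝ}

theorem congr_deriv (h : HasMixedDeriv G c) (hc : c = d) : HasMixedDeriv G d := hc ▸ h

theorem add (hG : HasMixedDeriv G c) (hH : HasMixedDeriv H d) :
    HasMixedDeriv (fun s t => G s t + H s t) (c + d) := by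
  refine ⟨(hG.1.and hH.1).mono fun s hs => hs.1.add hs.2, (hG.2.add hH.2).congr_of_eventuallyEq ?_⟩
  filter_upwards [hG.1, hH.1] with s hGs hHs
  exact deriv_add hGs hHs

theorem const_mul (hG : HasMixedDeriv G c) (k : ℝ) :
    HasMixedDeriv (fun s t => k * G s t) (k * c) := by
  refine ⟨hG.1.mono fun s hs => hs.const_mul k, (hG.2.const_mul k).congr_of_eventuallyEq ?_⟩
  filter_upwards [hG.1] with s hs
  exact deriv_const_mul k hs

theorem div_const (hG : HasMixedDeriv G c) (k : ℝ) :
    HasMixedDeriv (fun s t => G s t / k) (c / k) := by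
  simpa only [div_eq_inv_mul] using hG.const_mul k⁻¹

theorem sum {ι : Type*} (S : Finset ι) {G : ι → ℝ → ℝ → ℝ} {c : ι → ℝ}
    (h : ∀ i ∈ S, HasMixedDeriv (G i) (c i)) :
    HasMixedDeriv (fun s t => ∑ i ∈ S, G i s t) (∑ i ∈ S, c i) := by
  have hdiff : ∀ᶠ s in 𝓝 0, ∀ i ∈ S, DifferentiableAt ℝ (G i s) 0 :=
    (eventually_all_finset S).2 fun i hi => (h i hi).1
  refine ⟨hdiff.mono fun s hs => DifferentiableAt.fun_sum hs,
    (HasDerivAt.fun_sum fun i hi => (h i hi).2).congr_of_eventuallyEq ?_⟩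
  filter_upwards [hdiff] with s hs
  exact deriv_fun_sum hs

end HasMixedDeriv

theorem d2E_eq_of_hasMixedDeriv {E : (ℤ → ℝ) → ℝ} {y u v : ℤ → ℝ} {c : ℝ}
    (h : HasMixedDeriv (fun s t => E (y + s • u + t • v)) c) : d2E E y u v = c :=
  h.2.deriv

section Potential

variable {φ : ℝ → ℝ}

theorem hasDerivAt_of_contDiffOn_two (hφ : ContDiffOn ℝ 2 φ (Set.Ioi 0)) {x : ℝ} (hx : 0 < x) :
    HasDerivAt φ (deriv φ x) x :=
  ((hφ.differentiableOn (by norm_num)).differentiableAt (Ioi_mem_nhds hx)).hasDerivAt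

theorem hasDerivAt_deriv_of_contDiffOn_two (hφ : ContDiffOn ℝ 2 φ (Set.Ioi 0)) {x : ℝ}
    (hx : 0 < x) : HasDerivAt (deriv φ) (deriv (deriv φ) x) x :=
  (((hφ.deriv_of_isOpen (m := 1) isOpen_Ioi (by norm_num)).differentiableOn
    one_ne_zero).differentiableAt (Ioi_mem_nhds hx)).hasDerivAt

theorem hasMixedDeriv_comp_affine (hφ : ContDiffOn ℝ 2 φ (Set.Ioi 0)) {x : ℝ} (hx : 0 < x)
    (a b : ℝ) {L : ℝ → ℝ → ℝ} (hL : ∀ s t, L s t = x + s * a + t * b) :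
    HasMixedDeriv (fun s t => φ (L s t)) (deriv (deriv φ) x * a * b) := by
  have hline : ∀ p q : ℝ, HasDerivAt (fun r : ℝ => p + r * q) q 0 := fun p q => by
    simpa using ((hasDerivAt_id (0 : ℝ)).mul_const q).const_add p
  have hinner : ∀ s, 0 < x + s * a →
      HasDerivAt (fun t => φ (L s t)) (deriv φ (x + s * a) * b) 0 := fun s hs => by
    have := (hasDerivAt_of_contDiffOn_two hφ (by simpa using hs)).comp 0 (hline (x + s * a) b)
    simpa [Function.comp_def, hL] using this
  have hpos : ∀ᶠ s in 𝓝 (0 : ℝ), 0 < x + s * a :=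
    (hline x a).continuousAt.eventually (Ioi_mem_nhds (by simpa using hx))
  refine ⟨hpos.mono fun s hs => (hinner s hs).differentiableAt, ?_⟩
  have houter := ((hasDerivAt_deriv_of_contDiffOn_two hφ (by simpa using hx)).comp 0
    (hline x a)).mul_const b
  refine (by simpa [Function.comp_def] using houter :
    HasDerivAt (fun s => deriv φ (x + s * a) * b) _ 0).congr_of_eventuallyEq ?_
  filter_upwards [hpos] with s hs
  exact (hinner s hs).deriv

end Potential

theorem bD_yF_add_smul {N : ℕ} (hN : N ≠ 0) (F s t : ℝ) (u v : ℤ → ℝ) (ℓ : ℤ) :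
    bD N (yF N F + s • u + t • v) ℓ = F + s * bD N u ℓ + t * bD N v ℓ := by
  simp only [bD, yF, Pi.add_apply, Pi.smul_apply, smul_eq_mul]
  push_cast
  field_simp
  ring

theorem periodic_bD {N : ℕ} {u : ℤ → ℝ} (hu : Periodic u (2 * N)) : Periodic (bD N u) (2 * N) :=
  fun ℓ => by simp only [bD, hu ℓ, show ℓ + 2 * N - 1 = ℓ - 1 + 2 * N by ring, hu (ℓ - 1)]

/-- The `φ''(2F)`-part of `ε⁻¹ E_qce''(y_F)[u, v]`, written in `a = u'` and `b = v'`. -/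
def secondNeighbourForm (N K : ℕ) (a b : ℤ → ℝ) : ℝ :=
  ∑ ℓ ∈ idx N \ aQce K, 2 * (a ℓ * b ℓ + a (ℓ + 1) * b (ℓ + 1))
    + ∑ ℓ ∈ aQce K, ((a (ℓ - 1) + a ℓ) * (b (ℓ - 1) + b ℓ)
      + (a (ℓ + 1) + a (ℓ + 2)) * (b (ℓ + 1) + b (ℓ + 2))) / 2

section SecondVariation

variable {N : ℕ} {φ : ℝ → ℝ} {F : ℝ} (u v : ℤ → ℝ) (ℓ : ℤ)

theorem hasMixedDeriv_eCont (hN : N ≠ 0) (hφ : ContDiffOn ℝ 2 φ (Set.Ioi 0)) (hF : 0 < F) :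
    HasMixedDeriv (fun s t => eCont N φ (yF N F + s • u + t • v) ℓ)
      (deriv (deriv φ) F * ((bD N u ℓ * bD N v ℓ + bD N u (ℓ + 1) * bD N v (ℓ + 1)) / 2)
        + deriv (deriv φ) (2 * F)
          * (2 * (bD N u ℓ * bD N v ℓ + bD N u (ℓ + 1) * bD N v (ℓ + 1)))) := by
  have h2F : 0 < 2 * F := by linarith
  simp only [eCont, bD_yF_add_smul hN]
  refine (((((hasMixedDeriv_comp_affine hφ hF _ _ fun s t => rfl).add
    (hasMixedDeriv_comp_affine hφ hF _ _ fun s t => rfl)).add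
    (hasMixedDeriv_comp_affine hφ h2F (2 * bD N u ℓ) (2 * bD N v ℓ) fun s t => by ring)).add
    (hasMixedDeriv_comp_affine hφ h2F (2 * bD N u (ℓ + 1)) (2 * bD N v (ℓ + 1))
      fun s t => by ring)).div_const 2).congr_deriv (by ring)

theorem hasMixedDeriv_eAtom (hN : N ≠ 0) (hφ : ContDiffOn ℝ 2 φ (Set.Ioi 0)) (hF : 0 < F) :
    HasMixedDeriv (fun s t => eAtom N φ (yF N F + s • u + t • v) ℓ)
      (deriv (deriv φ) F * ((bD N u ℓ * bD N v ℓ + bD N u (ℓ + 1) * bD N v (ℓ + 1)) / 2)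
        + deriv (deriv φ) (2 * F)
          * (((bD N u (ℓ - 1) + bD N u ℓ) * (bD N v (ℓ - 1) + bD N v ℓ)
            + (bD N u (ℓ + 1) + bD N u (ℓ + 2)) * (bD N v (ℓ + 1) + bD N v (ℓ + 2))) / 2)) := by
  have h2F : 0 < 2 * F := by linarith
  simp only [eAtom, bD_yF_add_smul hN]
  refine (((((hasMixedDeriv_comp_affine hφ hF _ _ fun s t => rfl).add
    (hasMixedDeriv_comp_affine hφ hF _ _ fun s t => rfl)).add
    (hasMixedDeriv_comp_affine hφ h2F (bD N u (ℓ - 1) + bD N u ℓ) (bD N v (ℓ - 1) + bD N v ℓ)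
      fun s t => by ring)).add
    (hasMixedDeriv_comp_affine hφ h2F (bD N u (ℓ + 1) + bD N u (ℓ + 2))
      (bD N v (ℓ + 1) + bD N v (ℓ + 2)) fun s t => by ring)).div_const 2).congr_deriv (by ring)

end SecondVariation

theorem Int.sum_Icc_sub {M : Type*} [AddCommGroup M] (f : ℤ → M) {a b : ℤ} (h : a - 1 ≤ b) :
    ∑ i ∈ Icc a b, (f (i + 1) - f i) = f (b + 1) - f a := by
  induction b, h using Int.leInduction with
  | base => simp
  | succ b hb ih =>
    rw [← Finset.insert_Icc_right_eq_Icc_add_one (by omega), sum_insert (by simp), ih]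
    abel

theorem sum_idx_add_one {N : ℕ} {f : ℤ → ℝ} (hf : Periodic f (2 * N)) :
    ∑ ℓ ∈ idx N, f (ℓ + 1) = ∑ ℓ ∈ idx N, f ℓ := by
  rw [← sub_eq_zero, ← sum_sub_distrib, idx, Int.sum_Icc_sub f (by omega),
    show (N : ℤ) + 1 = -N + 1 + 2 * N by ring, hf, sub_self]

theorem aQce_subset_idx {N K : ℕ} (hKN : K < N) : aQce K ⊆ idx N := fun ℓ hℓ => by
  simp only [aQce, idx, mem_Icc] at hℓ ⊢
  omega

theorem d2E_Eqce_yF {N K : ℕ} (hKN : K < N) {φ : ℝ → ℝ} (hφ : ContDiffOn ℝ 2 φ (Set.Ioi 0))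
    {F : ℝ} (hF : 0 < F) {u v : ℤ → ℝ} (hu : Periodic u (2 * N)) (hv : Periodic v (2 * N)) :
    d2E (Eqce N K φ) (yF N F) u v = deriv (deriv φ) F * iprod N (bD N u) (bD N v)
      + deriv (deriv φ) (2 * F) * ((N : ℝ)⁻¹ * secondNeighbourForm N K (bD N u) (bD N v)) := by
  have hN : N ≠ 0 := by omega
  rw [d2E_eq_of_hasMixedDeriv
    (((HasMixedDeriv.sum _ fun ℓ _ => hasMixedDeriv_eCont u v ℓ hN hφ hF).add
      (HasMixedDeriv.sum _ fun ℓ _ => hasMixedDeriv_eAtom u v ℓ hN hφ hF)).const_mul _)]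
  have hnearest : ∑ ℓ ∈ idx N \ aQce K, (bD N u ℓ * bD N v ℓ + bD N u (ℓ + 1) * bD N v (ℓ + 1)) / 2
      + ∑ ℓ ∈ aQce K, (bD N u ℓ * bD N v ℓ + bD N u (ℓ + 1) * bD N v (ℓ + 1)) / 2
      = ∑ ℓ ∈ idx N, bD N u ℓ * bD N v ℓ := by
    rw [sum_sdiff (aQce_subset_idx hKN), ← sum_div, sum_add_distrib,
      sum_idx_add_one (f := fun ℓ => bD N u ℓ * bD N v ℓ) ((periodic_bD hu).mul (periodic_bD hv))]
    ring
  simp only [sum_add_distrib, ← mul_sum, iprod, secondNeighbourForm, ← hnearest]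
  ring

theorem abs_secondNeighbourForm_le {N K : ℕ} {a : ℤ → ℝ} {M : ℝ} (ha : ∀ ℓ, |a ℓ| ≤ M)
    (b : ℤ → ℝ) :
    |secondNeighbourForm N K a b| ≤ M * secondNeighbourForm N K 1 (fun ℓ => |b ℓ|) := by
  have hM : 0 ≤ M := (abs_nonneg _).trans (ha 0)
  have hterm : ∀ i y, |a i * y| ≤ M * |y| := fun i y => by
    rw [abs_mul]; exact mul_le_mul_of_nonneg_right (ha i) (abs_nonneg y)
  have hpair : ∀ i j y z, |(a i + a j) * (y + z)| ≤ 2 * M * (|y| + |z|) := fun i j y z => by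
    have hsum : |a i + a j| ≤ 2 * M := (abs_add_le _ _).trans (by linarith [ha i, ha j])
    rw [abs_mul]
    exact mul_le_mul hsum (abs_add_le y z) (abs_nonneg _) (by positivity)
  rw [secondNeighbourForm, secondNeighbourForm, mul_add, mul_sum, mul_sum]
  refine (abs_add_le _ _).trans (add_le_add
    ((abs_sum_le_sum_abs _ _).trans (sum_le_sum fun ℓ _ => ?_))
    ((abs_sum_le_sum_abs _ _).trans (sum_le_sum fun ℓ _ => ?_)))
  · rw [abs_mul, abs_two, Pi.one_apply, Pi.one_apply]
    linarith [abs_add_le (a ℓ * b ℓ) (a (ℓ + 1) * b (ℓ + 1)), hterm ℓ (b ℓ),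
      hterm (ℓ + 1) (b (ℓ + 1))]
  · simp only [abs_div, abs_two, Pi.one_apply]
    linarith [abs_add_le ((a (ℓ - 1) + a ℓ) * (b (ℓ - 1) + b ℓ))
      ((a (ℓ + 1) + a (ℓ + 2)) * (b (ℓ + 1) + b (ℓ + 2))),
      hpair (ℓ - 1) ℓ (b (ℓ - 1)) (b ℓ), hpair (ℓ + 1) (ℓ + 2) (b (ℓ + 1)) (b (ℓ + 2))]

theorem secondNeighbourForm_one_le {N K : ℕ} (hKN : K + 2 ≤ N) {w : ℤ → ℝ} (hw : ∀ ℓ, 0 ≤ w ℓ)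
    (hper : Periodic w (2 * N)) :
    secondNeighbourForm N K 1 w ≤ 5 * ∑ ℓ ∈ idx N, w ℓ := by
  have hA := aQce_subset_idx (N := N) (K := K) (by omega)
  have hbulk : ∑ ℓ ∈ idx N \ aQce K, 2 * (w ℓ + w (ℓ + 1))
      = 4 * ∑ ℓ ∈ idx N, w ℓ - ∑ ℓ ∈ aQce K, 2 * (w ℓ + w (ℓ + 1)) := by
    rw [eq_sub_iff_add_eq, sum_sdiff hA, ← mul_sum, sum_add_distrib, sum_idx_add_one hper]
    ring
  have htelescope : ∑ ℓ ∈ aQce K, (w (ℓ - 1) - w ℓ - w (ℓ + 1) + w (ℓ + 2))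
      = w (K + 2) - w K - w (-K + 1) + w (-K - 1) := by
    have := Int.sum_Icc_sub (fun i => w (i + 1) - w (i - 1)) (a := -K) (b := K) (by omega)
    simp only [add_sub_cancel_right] at this
    rw [aQce]
    convert this using 2 <;> ring_nf
  have hends : w (-K - 1) + w (K + 2) ≤ ∑ ℓ ∈ idx N, w ℓ := by
    rw [← sum_pair (f := w) (by omega : (-K - 1 : ℤ) ≠ K + 2)]
    exact sum_le_sum_of_subset_of_nonneg (by simp [insert_subset_iff, idx]; omega)
      fun i _ _ => hw i
  have hsplit : ∑ ℓ ∈ aQce K, ((1 + 1) * (w (ℓ - 1) + w ℓ) + (1 + 1) * (w (ℓ + 1) + w (ℓ + 2))) / 2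
      = ∑ ℓ ∈ aQce K, 2 * (w ℓ + w (ℓ + 1))
        + ∑ ℓ ∈ aQce K, (w (ℓ - 1) - w ℓ - w (ℓ + 1) + w (ℓ + 2)) := by
    rw [← sum_add_distrib]
    exact sum_congr rfl fun ℓ _ => by ring
  simp only [secondNeighbourForm, Pi.one_apply, one_mul]
  linarith [hw K, hw (-K + 1)]

theorem abs_le_nlinf {N : ℕ} (hN : N ≠ 0) {f : ℤ → ℝ} (hf : Periodic f (2 * N)) (ℓ : ℤ) :
    |f ℓ| ≤ nlinf N f := by
  obtain ⟨m, hm, hfm⟩ := hf.exists_mem_Ico (by omega) ℓ (-N + 1)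
  rw [hfm]
  exact le_ciSup (f := fun i : {i // i ∈ idx N} => |f i|) (Set.finite_range _).bddAbove
    ⟨m, by simp only [Set.mem_Ico] at hm; simp only [idx, mem_Icc]; omega⟩

theorem stmt12_general (N K : ℕ) (hKN : K + 3 ≤ N)
    (φ : ℝ → ℝ) (hφ : ContDiffOn ℝ 2 φ (Set.Ioi 0)) (F : ℝ) (hF : 0 < F) :
    ∀ u ∈ uSet N, ∀ v ∈ uSet N,
      |d2E (Eqce N K φ) (yF N F) u v - deriv (deriv φ) F * iprod N (bD N u) (bD N v)|
        ≤ 5 * |deriv (deriv φ) (2 * F)| * nlinf N (bD N u) * nl1 N (bD N v) := by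
  intro u hu v hv
  have hu' : Periodic (bD N u) (2 * N) := periodic_bD hu.1
  have hv' : Periodic (bD N v) (2 * N) := periodic_bD hv.1
  have hu'_le : ∀ ℓ, |bD N u ℓ| ≤ nlinf N (bD N u) := abs_le_nlinf (by omega) hu'
  have hcount : secondNeighbourForm N K 1 (fun ℓ => |bD N v ℓ|) ≤ 5 * ∑ ℓ ∈ idx N, |bD N v ℓ| :=
    secondNeighbourForm_one_le (by omega) (fun ℓ => abs_nonneg _) fun ℓ => congrArg abs (hv' ℓ)
  have hform : |secondNeighbourForm N K (bD N u) (bD N v)|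
      ≤ nlinf N (bD N u) * (5 * ∑ ℓ ∈ idx N, |bD N v ℓ|) :=
    (abs_secondNeighbourForm_le hu'_le _).trans
      (mul_le_mul_of_nonneg_left hcount ((abs_nonneg _).trans (hu'_le 0)))
  rw [d2E_Eqce_yF (by omega) hφ hF hu.1 hv.1, add_sub_cancel_left, abs_mul, abs_mul,
    abs_inv, Nat.abs_cast, nl1]
  calc |deriv (deriv φ) (2 * F)| * ((N : ℝ)⁻¹ * |secondNeighbourForm N K (bD N u) (bD N v)|)
      ≤ |deriv (deriv φ) (2 * F)| * ((N : ℝ)⁻¹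
          * (nlinf N (bD N u) * (5 * ∑ ℓ ∈ idx N, |bD N v ℓ|))) := by gcongr
    _ = _ := by ring

theorem stmt12 (N K : ℕ) (hN : 2 ≤ N) (hK : 1 < K) (hKN : K + 3 ≤ N)
    (φ : ℝ → ℝ) (hφ : ContDiffOn ℝ 2 φ (Set.Ioi 0)) (F : ℝ) (hF : 0 < F)
    (h2F : deriv (deriv φ) (2 * F) ≤ 0) :
    ∀ u ∈ uSet N, ∀ v ∈ uSet N,
      |d2E (Eqce N K φ) (yF N F) u v - deriv (deriv φ) F * iprod N (bD N u) (bD N v)|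
        ≤ 5 * |deriv (deriv φ) (2 * F)| * nlinf N (bD N u) * nl1 N (bD N v) :=
  stmt12_general N K hKN φ hφ F hF
end
end

section
/- Let X and Y be Banach spaces, U an open subset of X, and F : U → Y Fréchet differentiable. Suppose x₀ ∈ U and η, σ, L > 0 satisfy: ‖F(x₀)‖_Y ≤ η; the derivative F'(x₀) is invertible with ‖F'(x₀)^{−1}‖_{L(Y,X)} ≤ σ^{−1}; the closed ball of radius 2ησ^{−1} centered at x₀ is contained in U; ‖F'(x₁) − F'(x₂)‖_{L(X,Y)} ≤ L ‖x₁ − x₂‖_X whenever ‖x₁ − x₀‖_X ≤ 2ησ^{−1} and ‖x₂ − x₀‖_X ≤ 2ησ^{−1}; and 2Lσ^{−2}η < 1. Then there exists x ∈ X such that F(x) = 0 and ‖x − x₀‖_X ≤ 2ησ^{−1}. -/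
/-!
The simplified Newton map `g x = x - B (f x)`, with `B = F'(x₀)⁻¹`, has derivative
`B ∘ (F'(x₀) - F'(x))`, of norm at most `σ⁻¹ L ‖x - x₀‖` on the ball. Integrating along segments
gives `‖g x - g x₀‖ ≤ σ⁻¹ L / 2 ‖x - x₀‖²`, so `g` maps the ball of radius `r = 2 η σ⁻¹` into
itself, and by the mean value inequality it is a contraction there with constant
`σ⁻¹ L r = 2 L σ⁻² η < 1`. Its fixed point is a zero of `F`.
-/

open Set Metric

section

variable {E F : Type*} [NormedAddCommGroup E] [NormedSpace ℝ E] [NormedAddCommGroup F]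
  [NormedSpace ℝ F]

theorem Convex.norm_image_sub_le_half_mul_sq_of_norm_hasFDerivWithin_le {s : Set E} {f : E → F}
    {f' : E → E →L[ℝ] F} {x₀ y : E} {C : ℝ} (hs : Convex ℝ s)
    (hf : ∀ x ∈ s, HasFDerivWithinAt f (f' x) s x) (bound : ∀ x ∈ s, ‖f' x‖ ≤ C * ‖x - x₀‖)
    (hx₀ : x₀ ∈ s) (hy : y ∈ s) : ‖f y - f x₀‖ ≤ C / 2 * ‖y - x₀‖ ^ 2 := by
  set g : ℝ → E := (AffineMap.lineMap x₀ y : ℝ → E)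
  have segm : MapsTo g (Icc 0 1) s := hs.mapsTo_lineMap hx₀ hy
  have hD : ∀ t ∈ Icc (0 : ℝ) 1,
      HasDerivWithinAt (fun t ↦ f (g t) - f x₀) (f' (g t) (y - x₀)) (Icc 0 1) t := fun t ht ↦ by
    simpa using ((hf (g t) (segm ht)).comp_hasDerivWithinAt _
      AffineMap.hasDerivWithinAt_lineMap segm).sub_const (f x₀)
  have hB : ∀ t, HasDerivAt (fun t ↦ C / 2 * ‖y - x₀‖ ^ 2 * t ^ 2) (C * ‖y - x₀‖ ^ 2 * t) t :=
    fun t ↦ ((hasDerivAt_pow 2 t).const_mul (C / 2 * ‖y - x₀‖ ^ 2)).congr_deriv (by norm_num; ring)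
  have hderiv_le : ∀ t ∈ Ico (0 : ℝ) 1, ‖f' (g t) (y - x₀)‖ ≤ C * ‖y - x₀‖ ^ 2 * t := by
    intro t ht
    have hgt : ‖g t - x₀‖ = t * ‖y - x₀‖ := by
      simp [g, AffineMap.lineMap_apply, norm_smul, abs_of_nonneg ht.1]
    calc ‖f' (g t) (y - x₀)‖ ≤ ‖f' (g t)‖ * ‖y - x₀‖ := (f' (g t)).le_opNorm _
      _ ≤ C * (t * ‖y - x₀‖) * ‖y - x₀‖ := by
        gcongr; exact hgt ▸ bound _ (segm (Ico_subset_Icc_self ht))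
      _ = C * ‖y - x₀‖ ^ 2 * t := by ring
  simpa [g] using image_norm_le_of_norm_deriv_right_le_deriv_boundary
    (fun t ht ↦ (hD t ht).continuousWithinAt)
    (fun t ht ↦ (hD t (Ico_subset_Icc_self ht)).mono_of_mem_nhdsWithin (Icc_mem_nhdsGE_of_mem ht))
    (by simp [g]) hB hderiv_le (right_mem_Icc.2 zero_le_one)

theorem exists_isFixedPt_mem_closedBall_of_norm_hasFDerivAt_le [CompleteSpace E] {g : E → E}
    {g' : E → E →L[ℝ] E} {x₀ : E} {r c : ℝ} (hc : 0 ≤ c)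
    (hg : ∀ x ∈ closedBall x₀ r, HasFDerivAt g (g' x) x)
    (bound : ∀ x ∈ closedBall x₀ r, ‖g' x‖ ≤ c * ‖x - x₀‖)
    (hcontr : c * r < 1) (hstep : ‖g x₀ - x₀‖ + c / 2 * r ^ 2 ≤ r) :
    ∃ x ∈ closedBall x₀ r, Function.IsFixedPt g x := by
  have hr : 0 ≤ r := le_trans (by positivity) hstep
  have hx₀ : x₀ ∈ closedBall x₀ r := mem_closedBall_self hr
  have hg_within : ∀ x ∈ closedBall x₀ r, HasFDerivWithinAt g (g' x) (closedBall x₀ r) x :=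
    fun x hx ↦ (hg x hx).hasFDerivWithinAt
  have hmaps : MapsTo g (closedBall x₀ r) (closedBall x₀ r) := by
    intro x hx
    have hx' : ‖x - x₀‖ ≤ r := mem_closedBall_iff_norm.mp hx
    have hquad := (convex_closedBall x₀ r).norm_image_sub_le_half_mul_sq_of_norm_hasFDerivWithin_le
      hg_within bound hx₀ hx
    rw [mem_closedBall_iff_norm]
    calc ‖g x - x₀‖ ≤ ‖g x - g x₀‖ + ‖g x₀ - x₀‖ := norm_sub_le_norm_sub_add_norm_sub _ _ _
      _ ≤ c / 2 * r ^ 2 + ‖g x₀ - x₀‖ := by gcongr; exact hquad.trans (by gcongr)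
      _ ≤ r := by linarith
  set K : NNReal := ⟨c * r, by positivity⟩
  have hlip : LipschitzOnWith K g (closedBall x₀ r) := by
    refine (convex_closedBall x₀ r).lipschitzOnWith_of_nnnorm_hasFDerivWithin_le hg_within
      fun x hx ↦ ?_
    rw [← NNReal.coe_le_coe, coe_nnnorm]
    calc ‖g' x‖ ≤ c * ‖x - x₀‖ := bound x hx
      _ ≤ c * r := by gcongr; exact mem_closedBall_iff_norm.mp hx
  obtain ⟨x, hx, hfix, -⟩ := ContractingWith.exists_fixedPoint' isClosed_closedBall.isComplete
    hmaps ⟨hcontr, hlip.mapsToRestrict hmaps⟩ hx₀ (edist_ne_top _ _)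
  exact ⟨x, hx, hfix⟩

theorem HasFDerivAt.sub_comp_of_leftInverse {f : E → F} {f'x A : E →L[ℝ] F} {B : F →L[ℝ] E}
    {x : E} (hf : HasFDerivAt f f'x x) (hBA : Function.LeftInverse B A) :
    HasFDerivAt (fun x ↦ x - B (f x)) (B.comp (A - f'x)) x := by
  refine ((hasFDerivAt_id x).sub (B.hasFDerivAt.comp x hf)).congr_fderiv ?_
  ext v
  simp [hBA v]

end

theorem stmt18_general {X Y : Type*} [NormedAddCommGroup X] [NormedSpace ℝ X]
    [CompleteSpace X] [NormedAddCommGroup Y] [NormedSpace ℝ Y]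
    (Uo : Set X) (f : X → Y) (f' : X → X →L[ℝ] Y)
    (hdiff : ∀ x ∈ Uo, HasFDerivAt f (f' x) x)
    (x₀ : X) (η σ L : ℝ) (hη : 0 < η) (hσ : 0 < σ) (hL : 0 < L)
    (hres : ‖f x₀‖ ≤ η)
    (hinv : ∃ B : Y →L[ℝ] X, (∀ y : Y, f' x₀ (B y) = y) ∧ (∀ x : X, B (f' x₀ x) = x)
      ∧ ‖B‖ ≤ σ⁻¹)
    (hball : Metric.closedBall x₀ (2 * η * σ⁻¹) ⊆ Uo)
    (hLip : ∀ x₁ ∈ Metric.closedBall x₀ (2 * η * σ⁻¹),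
      ∀ x₂ ∈ Metric.closedBall x₀ (2 * η * σ⁻¹), ‖f' x₁ - f' x₂‖ ≤ L * ‖x₁ - x₂‖)
    (hsmall : 2 * L * σ⁻¹ ^ 2 * η < 1) :
    ∃ x : X, f x = 0 ∧ ‖x - x₀‖ ≤ 2 * η * σ⁻¹ := by
  obtain ⟨B, hfB, hBf, hB⟩ := hinv
  set r := 2 * η * σ⁻¹
  have hderiv : ∀ x ∈ closedBall x₀ r,
      HasFDerivAt (fun x ↦ x - B (f x)) (B.comp (f' x₀ - f' x)) x :=
    fun x hx ↦ (hdiff x (hball hx)).sub_comp_of_leftInverse hBf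
  have hbound : ∀ x ∈ closedBall x₀ r, ‖B.comp (f' x₀ - f' x)‖ ≤ σ⁻¹ * L * ‖x - x₀‖ := by
    intro x hx
    calc ‖B.comp (f' x₀ - f' x)‖ ≤ ‖B‖ * ‖f' x₀ - f' x‖ := B.opNorm_comp_le _
      _ ≤ σ⁻¹ * (L * ‖x₀ - x‖) := by
        gcongr
        exact hLip x₀ (mem_closedBall_self (by positivity)) x hx
      _ = σ⁻¹ * L * ‖x - x₀‖ := by rw [norm_sub_rev]; ring
  have hstep : ‖(x₀ - B (f x₀)) - x₀‖ ≤ σ⁻¹ * η := by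
    simpa using B.le_opNorm_of_le hres |>.trans (by gcongr)
  have hquad : σ⁻¹ * L / 2 * r ^ 2 ≤ η * σ⁻¹ :=
    calc σ⁻¹ * L / 2 * r ^ 2 = (2 * L * σ⁻¹ ^ 2 * η) * (η * σ⁻¹) := by ring
      _ ≤ 1 * (η * σ⁻¹) := by gcongr
      _ = η * σ⁻¹ := one_mul _
  obtain ⟨x, hx, hfix⟩ := exists_isFixedPt_mem_closedBall_of_norm_hasFDerivAt_le
    (by positivity) hderiv hbound (by linarith) (by linarith)
  refine ⟨x, ?_, mem_closedBall_iff_norm.mp hx⟩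
  have hBfx : B (f x) = 0 := sub_eq_self.mp hfix
  simpa [hBfx] using (hfB (f x)).symm

theorem stmt18 {X Y : Type*} [NormedAddCommGroup X] [NormedSpace ℝ X]
    [CompleteSpace X] [NormedAddCommGroup Y] [NormedSpace ℝ Y] [CompleteSpace Y]
    (Uo : Set X) (hUo : IsOpen Uo) (f : X → Y) (f' : X → X →L[ℝ] Y)
    (hdiff : ∀ x ∈ Uo, HasFDerivAt f (f' x) x)
    (x₀ : X) (hx₀ : x₀ ∈ Uo) (η σ L : ℝ) (hη : 0 < η) (hσ : 0 < σ) (hL : 0 < L)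
    (hres : ‖f x₀‖ ≤ η)
    (hinv : ∃ B : Y →L[ℝ] X, (∀ y : Y, f' x₀ (B y) = y) ∧ (∀ x : X, B (f' x₀ x) = x)
      ∧ ‖B‖ ≤ σ⁻¹)
    (hball : Metric.closedBall x₀ (2 * η * σ⁻¹) ⊆ Uo)
    (hLip : ∀ x₁ ∈ Metric.closedBall x₀ (2 * η * σ⁻¹),
      ∀ x₂ ∈ Metric.closedBall x₀ (2 * η * σ⁻¹), ‖f' x₁ - f' x₂‖ ≤ L * ‖x₁ - x₂‖)
    (hsmall : 2 * L * σ⁻¹ ^ 2 * η < 1) :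
    ∃ x : X, f x = 0 ∧ ‖x - x₀‖ ≤ 2 * η * σ⁻¹ :=
  stmt18_general Uo f f' hdiff x₀ η σ L hη hσ hL hres hinv hball hLip hsmall
end
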